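/- arXiv:quant-ph/0109124 — 5 statements merged into one kernel-verified Lean document; each statement's English description precedes it below -/
import Mathlib

section
/- (Peres PPT criterion) If a bipartite density matrix ρ on ℂ^m ⊗ ℂ^n is separable, i.e. a finite convex combination ρ = Σᵢ pᵢ ρᵢ ⊗ σᵢ of tensor products of density matrices, then its partial transpose ρ^{T_B} = Σᵢ pᵢ ρᵢ ⊗ σᵢᵀ is positive semidefinite. -/
open Matrix Kronecker BigOperators
open scoped ComplexOrder

/-- Partial transposition on the second factor of a bipartite matrix. -/
noncomputable def ptB {m n : ℕ}
    (M : Matrix (Fin m × Fin n) (Fin m × Fin n) ℂ) :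
    Matrix (Fin m × Fin n) (Fin m × Fin n) ℂ :=
  fun p q => M (p.1, q.2) (q.1, p.2)

section ptB

variable {m n : ℕ}

theorem ptB_sum {ι : Type*} (s : Finset ι) (M : ι → Matrix (Fin m × Fin n) (Fin m × Fin n) ℂ) :
    ptB (∑ i ∈ s, M i) = ∑ i ∈ s, ptB (M i) := by
  ext p q
  simp only [ptB, Matrix.sum_apply]

theorem ptB_smul (c : ℂ) (M : Matrix (Fin m × Fin n) (Fin m × Fin n) ℂ) :
    ptB (c • M) = c • ptB M :=
  rfl

theorem ptB_kronecker (A : Matrix (Fin m) (Fin m) ℂ) (B : Matrix (Fin n) (Fin n) ℂ) :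
    ptB (A ⊗ₖ B) = A ⊗ₖ Bᵀ :=
  rfl

end ptB

theorem ppt_of_separable_general (m n k : ℕ) (p : Fin k → ℝ) (hp : ∀ i, 0 ≤ p i)
    (ρs : Fin k → Matrix (Fin m) (Fin m) ℂ)
    (σs : Fin k → Matrix (Fin n) (Fin n) ℂ)
    (hρs : ∀ i, (ρs i).PosSemidef) (hσs : ∀ i, (σs i).PosSemidef)
    (ρ : Matrix (Fin m × Fin n) (Fin m × Fin n) ℂ)
    (hsep : ρ = ∑ i, (p i : ℂ) • (ρs i ⊗ₖ σs i)) :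
    (ptB ρ).PosSemidef := by
  simp only [hsep, ptB_sum, ptB_smul, ptB_kronecker]
  exact posSemidef_sum _ fun i _ =>
    ((hρs i).kronecker (hσs i).transpose).smul (Complex.zero_le_real.mpr (hp i))

/-- (Peres PPT criterion) If a bipartite density matrix `ρ` on `ℂ^m ⊗ ℂ^n`
is separable, i.e. a finite convex combination `ρ = Σᵢ pᵢ ρᵢ ⊗ σᵢ` of tensor
products of density matrices, then its partial transpose is positive
semidefinite. -/
theorem ppt_of_separable (m n k : ℕ) (p : Fin k → ℝ) (hp : ∀ i, 0 ≤ p i)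
    (hsum : ∑ i, p i = 1)
    (ρs : Fin k → Matrix (Fin m) (Fin m) ℂ)
    (σs : Fin k → Matrix (Fin n) (Fin n) ℂ)
    (hρs : ∀ i, (ρs i).PosSemidef) (hσs : ∀ i, (σs i).PosSemidef)
    (hρtr : ∀ i, (ρs i).trace = 1) (hσtr : ∀ i, (σs i).trace = 1)
    (ρ : Matrix (Fin m × Fin n) (Fin m × Fin n) ℂ)
    (hsep : ρ = ∑ i, (p i : ℂ) • (ρs i ⊗ₖ σs i)) :
    (ptB ρ).PosSemidef :=
  ppt_of_separable_general m n k p hp ρs σs hρs hσs ρ hsep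
end

section
/- (Reduction criterion) If ρ is a separable density matrix on ℂ^m ⊗ ℂ^n, then I ⊗ ρ_B − ρ ≥ 0 and ρ_A ⊗ I − ρ ≥ 0, where ρ_A and ρ_B are the reduced density matrices of ρ. -/
/-!
The map `ρ ↦ I ⊗ Tr_A ρ - ρ` is linear and sends a product `A ⊗ B` with `tr A = 1` to
`(I - A) ⊗ B`. A trace-one positive semidefinite matrix has its eigenvalues in `[0, 1]`, so
`I - A ≥ 0`; Kronecker products and nonnegative combinations of positive semidefinite matrices are
positive semidefinite. The inequality for `ρ_A ⊗ I - ρ` is symmetric.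
-/

open Matrix Kronecker BigOperators
open scoped ComplexOrder

/-- Partial trace over the second subsystem: `ρ_A = Tr_B ρ`. -/
noncomputable def trB {m n : ℕ}
    (ρ : Matrix (Fin m × Fin n) (Fin m × Fin n) ℂ) : Matrix (Fin m) (Fin m) ℂ :=
  fun i j => ∑ μ, ρ (i, μ) (j, μ)

/-- Partial trace over the first subsystem: `ρ_B = Tr_A ρ`. -/
noncomputable def trA {m n : ℕ}
    (ρ : Matrix (Fin m × Fin n) (Fin m × Fin n) ℂ) : Matrix (Fin n) (Fin n) ℂ :=
  fun μ ν => ∑ i, ρ (i, μ) (i, ν)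

section Kronecker

variable {R ι l m n p : Type*} [CommRing R] [Fintype ι]

theorem Matrix.kronecker_sum (A : Matrix l m R) (B : ι → Matrix n p R) :
    A ⊗ₖ (∑ i, B i) = ∑ i, A ⊗ₖ B i :=
  map_sum (kroneckerBilinear (R := R) (α := R) A) B _

theorem Matrix.sum_kronecker (A : ι → Matrix l m R) (B : Matrix n p R) :
    (∑ i, A i) ⊗ₖ B = ∑ i, A i ⊗ₖ B :=
  map_sum ((kroneckerBilinear (R := R) (α := R)).flip B) A _

theorem Matrix.sub_kronecker (A₁ A₂ : Matrix l m R) (B : Matrix n p R) :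
    (A₁ - A₂) ⊗ₖ B = A₁ ⊗ₖ B - A₂ ⊗ₖ B :=
  (kroneckerBilinear (R := R) (α := R)).map_sub₂ A₁ A₂ B

theorem Matrix.kronecker_sub (A : Matrix l m R) (B₁ B₂ : Matrix n p R) :
    A ⊗ₖ (B₁ - B₂) = A ⊗ₖ B₁ - A ⊗ₖ B₂ :=
  map_sub (kroneckerBilinear (R := R) (α := R) A) B₁ B₂

theorem Matrix.one_kronecker_sum_smul_sub_sum_smul_kronecker [DecidableEq l] (c : ι → R)
    (A : ι → Matrix l l R) (B : ι → Matrix n n R) :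
    1 ⊗ₖ (∑ i, c i • B i) - ∑ i, c i • (A i ⊗ₖ B i) = ∑ i, c i • ((1 - A i) ⊗ₖ B i) := by
  simp only [kronecker_sum, kronecker_smul, sub_kronecker, smul_sub, Finset.sum_sub_distrib]

theorem Matrix.sum_smul_kronecker_one_sub_sum_smul_kronecker [DecidableEq n] (c : ι → R)
    (A : ι → Matrix l l R) (B : ι → Matrix n n R) :
    (∑ i, c i • A i) ⊗ₖ 1 - ∑ i, c i • (A i ⊗ₖ B i) = ∑ i, c i • (A i ⊗ₖ (1 - B i)) := by
  simp only [sum_kronecker, smul_kronecker, kronecker_sub, smul_sub, Finset.sum_sub_distrib]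

end Kronecker

section PosSemidef

open scoped MatrixOrder

variable {𝕜 n : Type*} [RCLike 𝕜] [Fintype n]

theorem Matrix.PosSemidef.eigenvalues_le_re_trace [DecidableEq n] {A : Matrix n n 𝕜}
    (hA : A.PosSemidef) (i : n) : hA.1.eigenvalues i ≤ RCLike.re A.trace := by
  rw [hA.1.trace_eq_sum_eigenvalues, map_sum]
  simp only [RCLike.ofReal_re]
  exact Finset.single_le_sum (fun j _ => hA.eigenvalues_nonneg j) (Finset.mem_univ i)

theorem Matrix.PosSemidef.one_sub_of_trace_eq_one [DecidableEq n] {A : Matrix n n 𝕜}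
    (hA : A.PosSemidef) (htr : A.trace = 1) : (1 - A).PosSemidef := by
  have hA_le_one : A ≤ algebraMap ℝ (Matrix n n 𝕜) 1 := by
    rw [le_algebraMap_iff_spectrum_le hA.1, hA.1.spectrum_real_eq_range_eigenvalues]
    rintro _ ⟨i, rfl⟩
    simpa [htr] using hA.eigenvalues_le_re_trace i
  simpa [Matrix.le_iff] using hA_le_one

theorem Matrix.PosSemidef.sum_smul_kronecker {ι m : Type*} [Fintype ι] [Fintype m]
    {c : ι → 𝕜} {A : ι → Matrix m m 𝕜} {B : ι → Matrix n n 𝕜} (hc : ∀ i, 0 ≤ c i)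
    (hA : ∀ i, (A i).PosSemidef) (hB : ∀ i, (B i).PosSemidef) :
    (∑ i, c i • (A i ⊗ₖ B i)).PosSemidef :=
  posSemidef_sum _ fun i _ => ((hA i).kronecker (hB i)).smul (hc i)

end PosSemidef

section PartialTrace

variable {m n : ℕ}

theorem trA_kronecker (A : Matrix (Fin m) (Fin m) ℂ) (B : Matrix (Fin n) (Fin n) ℂ) :
    trA (A ⊗ₖ B) = A.trace • B := by
  ext μ ν
  simp [trA, Matrix.trace, Finset.sum_mul]

theorem trB_kronecker (A : Matrix (Fin m) (Fin m) ℂ) (B : Matrix (Fin n) (Fin n) ℂ) :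
    trB (A ⊗ₖ B) = B.trace • A := by
  ext i j
  simp [trB, Matrix.trace, Finset.mul_sum, mul_comm]

theorem trA_sum_smul {ι : Type*} [Fintype ι] (c : ι → ℂ)
    (ρ : ι → Matrix (Fin m × Fin n) (Fin m × Fin n) ℂ) :
    trA (∑ i, c i • ρ i) = ∑ i, c i • trA (ρ i) := by
  ext μ ν
  simp only [trA, Matrix.sum_apply, Matrix.smul_apply, smul_eq_mul, Finset.mul_sum]
  exact Finset.sum_comm

theorem trB_sum_smul {ι : Type*} [Fintype ι] (c : ι → ℂ)
    (ρ : ι → Matrix (Fin m × Fin n) (Fin m × Fin n) ℂ) :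
    trB (∑ i, c i • ρ i) = ∑ i, c i • trB (ρ i) := by
  ext i j
  simp only [trB, Matrix.sum_apply, Matrix.smul_apply, smul_eq_mul, Finset.mul_sum]
  exact Finset.sum_comm

end PartialTrace

theorem reduction_criterion_general (m n k : ℕ) (p : Fin k → ℝ) (hp : ∀ i, 0 ≤ p i)
    (ρs : Fin k → Matrix (Fin m) (Fin m) ℂ)
    (σs : Fin k → Matrix (Fin n) (Fin n) ℂ)
    (hρs : ∀ i, (ρs i).PosSemidef) (hσs : ∀ i, (σs i).PosSemidef)
    (hρtr : ∀ i, (ρs i).trace = 1) (hσtr : ∀ i, (σs i).trace = 1)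
    (ρ : Matrix (Fin m × Fin n) (Fin m × Fin n) ℂ)
    (hsep : ρ = ∑ i, (p i : ℂ) • (ρs i ⊗ₖ σs i)) :
    ((1 : Matrix (Fin m) (Fin m) ℂ) ⊗ₖ trA ρ - ρ).PosSemidef ∧
      (trB ρ ⊗ₖ (1 : Matrix (Fin n) (Fin n) ℂ) - ρ).PosSemidef := by
  have hp' : ∀ i, 0 ≤ (p i : ℂ) := fun i => Complex.zero_le_real.mpr (hp i)
  have htrA : trA ρ = ∑ i, (p i : ℂ) • σs i := by
    simp only [hsep, trA_sum_smul, trA_kronecker, hρtr, one_smul]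
  have htrB : trB ρ = ∑ i, (p i : ℂ) • ρs i := by
    simp only [hsep, trB_sum_smul, trB_kronecker, hσtr, one_smul]
  constructor
  · rw [htrA, hsep, one_kronecker_sum_smul_sub_sum_smul_kronecker]
    exact .sum_smul_kronecker hp' (fun i => (hρs i).one_sub_of_trace_eq_one (hρtr i)) hσs
  · rw [htrB, hsep, sum_smul_kronecker_one_sub_sum_smul_kronecker]
    exact .sum_smul_kronecker hp' hρs (fun i => (hσs i).one_sub_of_trace_eq_one (hσtr i))

/-- (Reduction criterion) If `ρ` is a separable density matrix on `ℂ^m ⊗ ℂ^n`,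
then `I ⊗ ρ_B − ρ ≥ 0` and `ρ_A ⊗ I − ρ ≥ 0`. -/
theorem reduction_criterion (m n k : ℕ) (p : Fin k → ℝ) (hp : ∀ i, 0 ≤ p i)
    (hsum : ∑ i, p i = 1)
    (ρs : Fin k → Matrix (Fin m) (Fin m) ℂ)
    (σs : Fin k → Matrix (Fin n) (Fin n) ℂ)
    (hρs : ∀ i, (ρs i).PosSemidef) (hσs : ∀ i, (σs i).PosSemidef)
    (hρtr : ∀ i, (ρs i).trace = 1) (hσtr : ∀ i, (σs i).trace = 1)
    (ρ : Matrix (Fin m × Fin n) (Fin m × Fin n) ℂ)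
    (hsep : ρ = ∑ i, (p i : ℂ) • (ρs i ⊗ₖ σs i)) :
    ((1 : Matrix (Fin m) (Fin m) ℂ) ⊗ₖ trA ρ - ρ).PosSemidef ∧
      (trB ρ ⊗ₖ (1 : Matrix (Fin n) (Fin n) ℂ) - ρ).PosSemidef :=
  reduction_criterion_general m n k p hp ρs σs hρs hσs hρtr hσtr ρ hsep
end

section
/- If ρ is a PPT density matrix on ℂ^d ⊗ ℂ^d (i.e. ρ^{T_B} ≥ 0), then its singlet fraction satisfies F(ρ) = Tr(ρ P₊) ≤ 1/d. -/
open Matrix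
open scoped ComplexOrder

/-- The projector onto the maximally entangled state `ψ₊ = (1/√d) Σᵢ |i⟩⊗|i⟩`. -/
noncomputable def Pplus (d : ℕ) : Matrix (Fin d × Fin d) (Fin d × Fin d) ℂ :=
  fun p q => (if p.1 = p.2 then 1 else 0) * (if q.1 = q.2 then 1 else 0) / d

/-!
Partial transposition preserves `Tr(A B)` when applied to both factors, and `P₊^{T_B} = V / d`
with `V` the swap operator. Hence `F(ρ) = Tr(ρ^{T_B} V) / d`. Since `V` is a Hermitian
involution, `1 - V = (1 - V)ᴴ (1 - V) / 2 ≥ 0`, so `Tr(σ V) ≤ Tr σ` for every positive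
semidefinite `σ`; applied to `σ = ρ^{T_B}`, whose trace is `Tr ρ = 1`, this gives `F(ρ) ≤ 1/d`.
-/

namespace Matrix

variable {n 𝕜 : Type*} [Fintype n] [RCLike 𝕜]

lemma PosSemidef.trace_mul_conjTranspose_mul_self_nonneg {A : Matrix n n 𝕜} (hA : A.PosSemidef)
    {m : Type*} [Fintype m] (C : Matrix m n 𝕜) : 0 ≤ (A * (Cᴴ * C)).trace := by
  rw [← Matrix.mul_assoc, trace_mul_comm, ← Matrix.mul_assoc]
  exact (hA.mul_mul_conjTranspose_same C).trace_nonneg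

lemma PosSemidef.trace_mul_le_trace_of_isHermitian_of_mul_self [DecidableEq n]
    {A V : Matrix n n 𝕜} (hA : A.PosSemidef) (hV : V.IsHermitian) (hVV : V * V = 1) :
    (A * V).trace ≤ A.trace := by
  have hsq : (1 - V)ᴴ * (1 - V) = (2 : 𝕜) • (1 - V) := by
    rw [conjTranspose_sub, conjTranspose_one, hV.eq, sub_mul, mul_sub, mul_sub, hVV]
    simp only [Matrix.one_mul, Matrix.mul_one, two_smul]
    abel
  have h := hA.trace_mul_conjTranspose_mul_self_nonneg (1 - V)
  rw [hsq, mul_smul_comm, trace_smul, mul_sub, trace_sub, Matrix.mul_one, smul_eq_mul] at h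
  have h := mul_nonneg (inv_nonneg_of_nonneg zero_le_two) h
  rwa [inv_mul_cancel_left₀ two_ne_zero, sub_nonneg] at h

end Matrix

namespace Equiv.Perm

variable {ι R : Type*} [DecidableEq ι]

lemma isHermitian_permMatrix_of_mul_self [NonAssocSemiring R] [StarRing R] {σ : Perm ι}
    (hσ : σ * σ = 1) : (σ.permMatrix R).IsHermitian := by
  rw [IsHermitian, conjTranspose_permMatrix, inv_eq_of_mul_eq_one_left hσ]

lemma permMatrix_mul_self_of_mul_self [Fintype ι] [NonAssocSemiring R] {σ : Perm ι}
    (hσ : σ * σ = 1) : σ.permMatrix R * σ.permMatrix R = 1 := by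
  rw [← permMatrix_mul, hσ, permMatrix_one]

end Equiv.Perm

lemma trace_ptB {m n : ℕ} (A : Matrix (Fin m × Fin n) (Fin m × Fin n) ℂ) :
    (ptB A).trace = A.trace := rfl

lemma trace_ptB_mul_ptB {m n : ℕ} (A B : Matrix (Fin m × Fin n) (Fin m × Fin n) ℂ) :
    (ptB A * ptB B).trace = (A * B).trace := by
  simp only [trace, diag, mul_apply, ptB, Fintype.sum_prod_type]
  refine Finset.sum_congr rfl fun i _ => ?_
  rw [Finset.sum_comm]
  exact (Finset.sum_congr rfl fun k _ => Finset.sum_comm).trans Finset.sum_comm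

lemma ptB_Pplus (d : ℕ) :
    ptB (Pplus d) = (d : ℂ)⁻¹ • Equiv.Perm.permMatrix ℂ (Equiv.prodComm (Fin d) (Fin d)) := by
  ext p q
  simp only [ptB, Pplus, Matrix.smul_apply, Equiv.toPEquiv_apply, PEquiv.toMatrix_apply,
    Option.mem_def, Option.some_inj, Equiv.prodComm_apply, Prod.ext_iff, Prod.fst_swap,
    Prod.snd_swap, @eq_comm _ q.1 p.2, ite_and, smul_eq_mul, div_eq_inv_mul]
  split_ifs <;> simp

theorem singlet_fraction_le_of_ppt_general (d : ℕ)
    (ρ : Matrix (Fin d × Fin d) (Fin d × Fin d) ℂ)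
    (htr : ρ.trace = 1)
    (hppt : (ptB ρ).PosSemidef) :
    (ρ * Pplus d).trace ≤ ((d : ℂ))⁻¹ := by
  have hswap : (Equiv.prodComm (Fin d) (Fin d) : Equiv.Perm (Fin d × Fin d)) *
      Equiv.prodComm (Fin d) (Fin d) = 1 := rfl
  calc (ρ * Pplus d).trace
      = (d : ℂ)⁻¹ * (ptB ρ * Equiv.Perm.permMatrix ℂ (Equiv.prodComm (Fin d) (Fin d))).trace := by
        rw [← trace_ptB_mul_ptB, ptB_Pplus, mul_smul_comm, trace_smul, smul_eq_mul]
    _ ≤ (d : ℂ)⁻¹ * (ptB ρ).trace :=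
        mul_le_mul_of_nonneg_left
          (hppt.trace_mul_le_trace_of_isHermitian_of_mul_self
            (Equiv.Perm.isHermitian_permMatrix_of_mul_self hswap)
            (Equiv.Perm.permMatrix_mul_self_of_mul_self hswap))
          (inv_nonneg_of_nonneg (Nat.cast_nonneg d))
    _ = (d : ℂ)⁻¹ := by rw [trace_ptB, htr, mul_one]

/-- If `ρ` is a PPT density matrix on `ℂ^d ⊗ ℂ^d`, then its singlet fraction
satisfies `F(ρ) = Tr(ρ P₊) ≤ 1/d`. -/
theorem singlet_fraction_le_of_ppt (d : ℕ) (hd : 0 < d)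
    (ρ : Matrix (Fin d × Fin d) (Fin d × Fin d) ℂ)
    (hρ : ρ.PosSemidef) (htr : ρ.trace = 1)
    (hppt : (ptB ρ).PosSemidef) :
    (ρ * Pplus d).trace ≤ ((d : ℂ))⁻¹ :=
  singlet_fraction_le_of_ppt_general d ρ htr hppt
end

section
/- Every eigenvalue of the partial transpose of a two-qubit pure state projector is at least −1/2: for any unit vector ψ ∈ ℂ² ⊗ ℂ², the operator (|ψ⟩⟨ψ|)^{T_B} has all eigenvalues ≥ −1/2. -/
/-!
Write `ψ` and a unit vector `v` as `2 × n` coefficient matrices `Ψ`, `V` and put `D = Ψ Vᵀ`. The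
quadratic form of the partial transpose at `v` is `∑ p q, D p q * conj (D q p)`; its diagonal terms
are `|D p p|² ≥ 0`, so it is at least `-2 |D 0 1| |D 1 0|`. By Cauchy–Schwarz `|D 0 1|² ≤ r₀ u₁` and
`|D 1 0|² ≤ r₁ u₀`, where `r`, `u` are the squared row norms of `Ψ`, `V`; these sum to `1`, so
`(|D 0 1| |D 1 0|)² ≤ (r₀ r₁) (u₀ u₁) ≤ 1/16`. Every eigenvalue is a value of the form at a unit
eigenvector, hence at least `-1/2`.
-/

open Matrix BigOperators
open scoped ComplexOrder

lemma Matrix.IsHermitian.le_eigenvalues_of_le_re_dotProduct {𝕜 ι : Type*} [RCLike 𝕜]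
    [Fintype ι] [DecidableEq ι] {A : Matrix ι ι 𝕜} (hA : A.IsHermitian) {c : ℝ}
    (hc : ∀ v : ι → 𝕜, ∑ x, ‖v x‖ ^ 2 = 1 → c ≤ RCLike.re (star v ⬝ᵥ (A *ᵥ v))) (i : ι) :
    c ≤ hA.eigenvalues i := by
  rw [hA.eigenvalues_eq]
  apply hc
  rw [← EuclideanSpace.norm_sq_eq, hA.eigenvectorBasis.orthonormal.1 i, one_pow]

lemma sum_norm_sq_eq_one_of_sum_star_mul_self_eq_one {ι : Type*} [Fintype ι] {ψ : ι → ℂ}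
    (hψ : ∑ x, star (ψ x) * ψ x = 1) : ∑ x, ‖ψ x‖ ^ 2 = 1 := by
  simp only [Complex.star_def, Complex.conj_mul'] at hψ
  exact_mod_cast hψ

lemma sum_fin_two_prod {M : Type*} [AddCommMonoid M] {n : ℕ} (f : Fin 2 × Fin n → M) :
    ∑ x, f x = ∑ k, f (0, k) + ∑ k, f (1, k) := by
  rw [Fintype.sum_prod_type, Fin.sum_univ_two]

lemma mul_le_one_div_four_of_add_eq_one {a b : ℝ} (h : a + b = 1) : a * b ≤ 1 / 4 := by
  nlinarith [sq_nonneg (a - b)]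

lemma norm_sum_mul_sq_le {ι : Type*} [Fintype ι] (a b : ι → ℂ) :
    ‖∑ k, a k * b k‖ ^ 2 ≤ (∑ k, ‖a k‖ ^ 2) * ∑ k, ‖b k‖ ^ 2 := by
  calc ‖∑ k, a k * b k‖ ^ 2 ≤ (∑ k, ‖a k‖ * ‖b k‖) ^ 2 := by
        gcongr
        simpa only [norm_mul] using norm_sum_le Finset.univ (fun k ↦ a k * b k)
    _ ≤ _ := Finset.sum_mul_sq_le_sq_mul_sq _ _ _

section

variable {m n : ℕ}

/-- The entries of `Ψ Vᵀ`, for `ψ` and `v` read as `m × n` coefficient matrices. -/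
def contractSnd (ψ v : Fin m × Fin n → ℂ) (p q : Fin m) : ℂ := ∑ k, ψ (p, k) * v (q, k)

lemma star_dotProduct_ptB_vecMulVec_mulVec (ψ v : Fin m × Fin n → ℂ) :
    star v ⬝ᵥ (ptB (vecMulVec ψ (star ψ)) *ᵥ v)
      = ∑ p, ∑ q, contractSnd ψ v p q * star (contractSnd ψ v q p) := by
  simp only [dotProduct, mulVec, ptB, vecMulVec_apply, contractSnd, Fintype.sum_prod_type,
    star_sum, star_mul', Finset.mul_sum, Finset.sum_mul, Pi.star_apply]
  refine Finset.sum_congr rfl fun p _ ↦ ?_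
  rw [Finset.sum_comm]
  exact Finset.sum_congr rfl fun q _ ↦ Finset.sum_congr rfl fun k _ ↦
    Finset.sum_congr rfl fun l _ ↦ by ring

lemma norm_contractSnd_sq_le (ψ v : Fin m × Fin n → ℂ) (p q : Fin m) :
    ‖contractSnd ψ v p q‖ ^ 2 ≤ (∑ k, ‖ψ (p, k)‖ ^ 2) * ∑ k, ‖v (q, k)‖ ^ 2 :=
  norm_sum_mul_sq_le _ _

end

lemma neg_two_mul_norm_mul_norm_le_re_sum_fin_two (D : Fin 2 → Fin 2 → ℂ) :
    -(2 * (‖D 0 1‖ * ‖D 1 0‖)) ≤ (∑ p, ∑ q, D p q * star (D q p)).re := by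
  have hdiag (p : Fin 2) : 0 ≤ (D p p * star (D p p)).re := by
    rw [Complex.star_def, Complex.mul_conj]
    exact Complex.normSq_nonneg _
  have hoff : -‖D 0 1 * star (D 1 0)‖ ≤ (D 0 1 * star (D 1 0)).re :=
    neg_le_of_abs_le (Complex.abs_re_le_norm _)
  have hswap : (D 1 0 * star (D 0 1)).re = (D 0 1 * star (D 1 0)).re := by
    rw [← Complex.conj_re]
    simp [mul_comm]
  simp only [Fin.sum_univ_two, Complex.add_re, hswap]
  rw [norm_mul, norm_star] at hoff
  linarith [hdiag 0, hdiag 1]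

lemma mul_le_one_div_four_of_sq_le {x y r₀ r₁ u₀ u₁ : ℝ}
    (hr₀ : 0 ≤ r₀) (hu₀ : 0 ≤ u₀) (hu₁ : 0 ≤ u₁)
    (hxsq : x ^ 2 ≤ r₀ * u₁) (hysq : y ^ 2 ≤ r₁ * u₀) (hr : r₀ + r₁ = 1) (hu : u₀ + u₁ = 1) :
    x * y ≤ 1 / 4 := by
  have hr' := mul_le_one_div_four_of_add_eq_one hr
  have hu' := mul_le_one_div_four_of_add_eq_one hu
  have : (x * y) ^ 2 ≤ (1 / 4) ^ 2 := calc
    (x * y) ^ 2 = x ^ 2 * y ^ 2 := mul_pow x y 2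
    _ ≤ (r₀ * u₁) * (r₁ * u₀) := by gcongr
    _ = (r₀ * r₁) * (u₀ * u₁) := by ring
    _ ≤ 1 / 4 * (1 / 4) := by gcongr
    _ = (1 / 4) ^ 2 := by ring
  exact le_of_sq_le_sq this (by norm_num)

lemma neg_one_div_two_le_re_star_dotProduct_ptB_vecMulVec_mulVec {n : ℕ}
    (ψ v : Fin 2 × Fin n → ℂ) (hψ : ∑ x, ‖ψ x‖ ^ 2 = 1) (hv : ∑ x, ‖v x‖ ^ 2 = 1) :
    -(1 / 2) ≤ (star v ⬝ᵥ (ptB (vecMulVec ψ (star ψ)) *ᵥ v)).re := by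
  rw [sum_fin_two_prod] at hψ hv
  have hoff := mul_le_one_div_four_of_sq_le (by positivity) (by positivity) (by positivity)
    (norm_contractSnd_sq_le ψ v 0 1) (norm_contractSnd_sq_le ψ v 1 0) hψ hv
  rw [star_dotProduct_ptB_vecMulVec_mulVec]
  linarith [neg_two_mul_norm_mul_norm_le_re_sum_fin_two (contractSnd ψ v)]

/-- Every eigenvalue of the partial transpose of a two-qubit pure state
projector `|ψ⟩⟨ψ|` is at least `−1/2`. -/
theorem ptB_pure_eigenvalue_lower_bound (ψ : Fin 2 × Fin 2 → ℂ)
    (hψ : ∑ x, star (ψ x) * ψ x = 1)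
    (h : (ptB (Matrix.vecMulVec ψ (star ψ))).IsHermitian) :
    ∀ i, -(1 / 2 : ℝ) ≤ h.eigenvalues i :=
  h.le_eigenvalues_of_le_re_dotProduct fun v hv ↦
    neg_one_div_two_le_re_star_dotProduct_ptB_vecMulVec_mulVec ψ v
      (sum_norm_sq_eq_one_of_sum_star_mul_self_eq_one hψ) hv
end

section
/- The five vectors v₀ = |0⟩⊗(|0⟩−|1⟩)/√2, v₁ = (|0⟩−|1⟩)/√2 ⊗ |2⟩, v₂ = |2⟩⊗(|1⟩−|2⟩)/√2, v₃ = (|1⟩−|2⟩)/√2 ⊗ |0⟩, v₄ = (1/3)(|0⟩+|1⟩+|2⟩)⊗(|0⟩+|1⟩+|2⟩) in ℂ³ ⊗ ℂ³ are pairwise orthogonal unit product vectors, and there exists no nonzero product vector φ ⊗ χ orthogonal to all five of them. -/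
open BigOperators

/-- The five 'Tiles' unextendible-product-basis vectors in `ℂ³ ⊗ ℂ³`. -/
noncomputable def tiles : Fin 5 → Fin 3 × Fin 3 → ℂ
  | 0 => fun x => (if x.1 = 0 then 1 else 0) *
      ((if x.2 = 0 then 1 else 0) - (if x.2 = 1 then 1 else 0)) /
        (Real.sqrt 2 : ℂ)
  | 1 => fun x => ((if x.1 = 0 then 1 else 0) - (if x.1 = 1 then 1 else 0)) *
      (if x.2 = 2 then 1 else 0) / (Real.sqrt 2 : ℂ)
  | 2 => fun x => (if x.1 = 2 then 1 else 0) *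
      ((if x.2 = 1 then 1 else 0) - (if x.2 = 2 then 1 else 0)) /
        (Real.sqrt 2 : ℂ)
  | 3 => fun x => ((if x.1 = 1 then 1 else 0) - (if x.1 = 2 then 1 else 0)) *
      (if x.2 = 0 then 1 else 0) / (Real.sqrt 2 : ℂ)
  | 4 => fun _ => 1 / 3

/-- Key algebraic lemma: the orthogonality system forces one factor to vanish. -/
lemma tiles_key (A0 A1 A2 B0 B1 B2 : ℂ)
    (h1 : A0*(B0-B1)=0) (h2 : (A0-A1)*B2=0) (h3 : A2*(B1-B2)=0)
    (h4 : (A1-A2)*B0=0) (h5 : (A0+A1+A2)*(B0+B1+B2)=0) :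
    (A0=0 ∧ A1=0 ∧ A2=0) ∨ (B0=0 ∧ B1=0 ∧ B2=0) := by
  rcases mul_eq_zero.mp h1 with h1|h1 <;>
  rcases mul_eq_zero.mp h2 with h2|h2 <;>
  rcases mul_eq_zero.mp h3 with h3|h3 <;>
  rcases mul_eq_zero.mp h4 with h4|h4 <;>
  rcases mul_eq_zero.mp h5 with h5|h5 <;>
  (try simp only [sub_eq_zero] at h1) <;>
  (try simp only [sub_eq_zero] at h2) <;>
  (try simp only [sub_eq_zero] at h3) <;>
  (try simp only [sub_eq_zero] at h4) <;>
  (try subst h1) <;> (try subst h2) <;> (try subst h3) <;> (try subst h4) <;>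
  simp_all <;>
  first
    | (left; linear_combination h5/3)
    | (right; linear_combination h5/3)

set_option maxHeartbeats 1000000 in
/-- The Tiles vectors are pairwise orthogonal unit product vectors, and no
nonzero product vector `φ ⊗ χ` is orthogonal to all five of them
(unextendible product basis). -/
theorem tiles_upb :
    (∀ k, ∑ x, star (tiles k x) * tiles k x = 1) ∧
    (∀ k l, k ≠ l → ∑ x, star (tiles k x) * tiles l x = 0) ∧
    (∀ k, ∃ a b : Fin 3 → ℂ, ∀ x : Fin 3 × Fin 3, tiles k x = a x.1 * b x.2) ∧
    ¬ ∃ a b : Fin 3 → ℂ, (∃ x : Fin 3 × Fin 3, a x.1 * b x.2 ≠ 0) ∧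
        ∀ k, ∑ x, star (tiles k x) * (a x.1 * b x.2) = 0 := by
  have h2 : ((Real.sqrt 2 : ℝ) : ℂ) * ((Real.sqrt 2 : ℝ) : ℂ) = 2 := by
    rw [← Complex.ofReal_mul, Real.mul_self_sqrt (by norm_num : (0:ℝ) ≤ 2)]
    norm_num
  have hne : ((Real.sqrt 2 : ℝ) : ℂ) ≠ 0 := by
    simp [Real.sqrt_ne_zero']
  refine ⟨?_, ?_, ?_, ?_⟩
  · intro k
    fin_cases k <;>
    · simp only [tiles, Fintype.sum_prod_type, Fin.sum_univ_three]
      norm_num [Fin.ext_iff]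
      try (field_simp; linear_combination -h2)
  · intro k l h
    fin_cases k <;> fin_cases l <;>
      first
        | exact absurd rfl h
        | (simp only [tiles, Fintype.sum_prod_type, Fin.sum_univ_three]
           norm_num [Fin.ext_iff]
           try field_simp
           try ring)
  · intro k
    fin_cases k
    · exact ⟨fun i => (if i = 0 then 1 else 0) / (Real.sqrt 2 : ℂ),
        fun j => (if j = 0 then 1 else 0) - (if j = 1 then 1 else 0),
        fun x => by simp only [tiles]; split_ifs <;> ring⟩
    · exact ⟨fun i => ((if i = 0 then 1 else 0) - (if i = 1 then 1 else 0)) / (Real.sqrt 2 : ℂ),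
        fun j => if j = 2 then 1 else 0,
        fun x => by simp only [tiles]; split_ifs <;> ring⟩
    · exact ⟨fun i => (if i = 2 then 1 else 0) / (Real.sqrt 2 : ℂ),
        fun j => (if j = 1 then 1 else 0) - (if j = 2 then 1 else 0),
        fun x => by simp only [tiles]; split_ifs <;> ring⟩
    · exact ⟨fun i => ((if i = 1 then 1 else 0) - (if i = 2 then 1 else 0)) / (Real.sqrt 2 : ℂ),
        fun j => if j = 0 then 1 else 0,
        fun x => by simp only [tiles]; split_ifs <;> ring⟩
    · exact ⟨fun _ => 1, fun _ => 1 / 3, fun x => by simp [tiles]⟩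
  · rintro ⟨a, b, ⟨x, hx⟩, h⟩
    have h0 := h 0
    have h1 := h 1
    have h3 := h 2
    have h4 := h 3
    have h5 := h 4
    simp only [tiles, Fintype.sum_prod_type, Fin.sum_univ_three] at h0
    simp only [tiles, Fintype.sum_prod_type, Fin.sum_univ_three] at h1
    simp only [tiles, Fintype.sum_prod_type, Fin.sum_univ_three] at h3
    simp only [tiles, Fintype.sum_prod_type, Fin.sum_univ_three] at h4
    simp only [tiles, Fintype.sum_prod_type, Fin.sum_univ_three] at h5
    norm_num [Fin.ext_iff] at h0 h1 h3 h4 h5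
    have e1 : a 0 * (b 0 - b 1) = 0 := by
      field_simp at h0; linear_combination h0
    have e2 : (a 0 - a 1) * b 2 = 0 := by
      field_simp at h1; linear_combination h1
    have e3 : a 2 * (b 1 - b 2) = 0 := by
      field_simp at h3; linear_combination h3
    have e4 : (a 1 - a 2) * b 0 = 0 := by
      field_simp at h4; linear_combination h4
    have e5 : (a 0 + a 1 + a 2) * (b 0 + b 1 + b 2) = 0 := by
      linear_combination 3 * h5
    rcases tiles_key _ _ _ _ _ _ e1 e2 e3 e4 e5 with ⟨u0, u1, u2⟩ | ⟨u0, u1, u2⟩ <;>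
    · apply hx
      fin_cases x <;> simp_all
end
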